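/- There exists an optimal schedule σ* in which the earlier-schedule jobs appear in increasing index order of start times, the later-schedule jobs appear in increasing index order of start times, every earlier-schedule job J_j satisfies C_j(σ*) ≤ C_j(π*), and for every earlier-schedule idle time unit t of σ*, every earlier-schedule job J_j with S_j(σ*) ≥ t+1 satisfies C_j(π*) − C_j(σ*) = Δ_max(σ*); that is, each job in the earlier schedule after the idle time period is processed exactly Δ_max time units earlier than in π*. -/
import Mathlib


open Finset

variable (n : ℕ)

/-- Completion time of job `j` in the original WSPT schedule `π*`:
`C_j(π*) = p_1 + ⋯ + p_j`. -/
def Corig (p : Fin n → ℤ) (j : Fin n) : ℤ :=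
  ∑ i ∈ Finset.univ.filter (fun i => i ≤ j), p i

/-- Start time of job `j` in the original schedule `π*`. -/
def Sorig (p : Fin n → ℤ) (j : Fin n) : ℤ :=
  Corig n p j - p j

/-- A feasible schedule: integer start times `σ j ≥ 0`, pairwise disjoint open
processing intervals, and every job either completes by `T1` (earlier schedule)
or starts at or after `T2` (later schedule). -/
def Feasible (p : Fin n → ℤ) (T1 T2 : ℤ) (σ : Fin n → ℤ) : Prop :=
  (∀ j, 0 ≤ σ j) ∧
  (∀ i j, i ≠ j → σ i + p i ≤ σ j ∨ σ j + p j ≤ σ i) ∧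
  (∀ j, σ j + p j ≤ T1 ∨ T2 ≤ σ j)

/-- Time deviation of job `j`: `Δ_j(σ) = |C_j(σ) − C_j(π*)|`. -/
def Dev (p : Fin n → ℤ) (σ : Fin n → ℤ) (j : Fin n) : ℤ :=
  |σ j + p j - Corig n p j|

/-- Maximum time deviation `Δ_max(σ) = max_{1≤j≤n} Δ_j(σ)` (all deviations are
nonnegative, so folding `max` from `0` gives the maximum when `n ≥ 1`). -/
def Dmax (p : Fin n → ℤ) (σ : Fin n → ℤ) : ℤ :=
  Finset.fold max 0 (Dev n p σ) Finset.univ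

/-- Admissible: feasible with `Δ_max(σ) ≤ k`. -/
def Admissible (p : Fin n → ℤ) (T1 T2 k : ℤ) (σ : Fin n → ℤ) : Prop :=
  Feasible n p T1 T2 σ ∧ Dmax n p σ ≤ k

/-- Total weighted completion time `Σ_j w_j · C_j(σ)`. -/
def WObj (p w : Fin n → ℤ) (σ : Fin n → ℤ) : ℤ :=
  ∑ j, w j * (σ j + p j)

/-- The objective `Z(σ) = μ·Δ_max(σ) + Σ_j w_j·C_j(σ)`. -/
def Zval (p w : Fin n → ℤ) (μ : ℚ) (σ : Fin n → ℤ) : ℚ :=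
  μ * (Dmax n p σ : ℚ) + (WObj n p w σ : ℚ)

/-- Optimal: admissible and minimizing `Z` over all admissible schedules. -/
def Optimal (p w : Fin n → ℤ) (T1 T2 k : ℤ) (μ : ℚ) (σ : Fin n → ℤ) : Prop :=
  Admissible n p T1 T2 k σ ∧
  ∀ τ, Admissible n p T1 T2 k τ → Zval n p w μ σ ≤ Zval n p w μ τ

/-- `t ≥ 0` is an earlier-schedule idle time unit of `σ`: no job is processed
during `[t, t+1]` and some earlier-schedule job starts at or after `t+1`. -/
def IdleUnit (p : Fin n → ℤ) (T1 : ℤ) (σ : Fin n → ℤ) (t : ℤ) : Prop :=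
  0 ≤ t ∧ (∀ m, ¬(σ m ≤ t ∧ t + 1 ≤ σ m + p m)) ∧
  ∃ j, σ j + p j ≤ T1 ∧ t + 1 ≤ σ j

/-- Number of "inversions": pairs processed in the wrong index order. -/
def Nval (σ : Fin n → ℤ) : ℕ :=
  ((Finset.univ : Finset (Fin n × Fin n)).filter
    (fun q => q.1 < q.2 ∧ σ q.2 < σ q.1)).card

lemma dev_le_dmax (p σ : Fin n → ℤ) (j : Fin n) : Dev n p σ j ≤ Dmax n p σ :=
  (Finset.le_fold_max _).mpr (Or.inr ⟨j, mem_univ j, le_rfl⟩)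

lemma dmax_nonneg (p σ : Fin n → ℤ) : 0 ≤ Dmax n p σ :=
  (Finset.le_fold_max _).mpr (Or.inl le_rfl)

lemma dmax_le (p σ : Fin n → ℤ) {c : ℤ} (hc : 0 ≤ c) (h : ∀ j, Dev n p σ j ≤ c) :
    Dmax n p σ ≤ c :=
  (Finset.fold_max_le _).mpr ⟨hc, fun j _ => h j⟩

lemma p_le_corig (p : Fin n → ℤ) (hp : ∀ j, 0 < p j) (j : Fin n) : p j ≤ Corig n p j := by
  unfold Corig
  exact Finset.single_le_sum (fun i _ => (hp i).le) (by simp)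

lemma corig_add_le (p : Fin n → ℤ) (hp : ∀ j, 0 < p j) {m j : Fin n} (h : m < j) :
    Corig n p m + p j ≤ Corig n p j := by
  unfold Corig
  have hsub : Finset.univ.filter (fun i => i ≤ m) ⊆ Finset.univ.filter (fun i => i ≤ j) := by
    intro i hi
    simp only [mem_filter, mem_univ, true_and] at hi ⊢
    exact hi.trans h.le
  rw [← Finset.sum_sdiff hsub]
  have hj : j ∈ Finset.univ.filter (fun i => i ≤ j) \ Finset.univ.filter (fun i => i ≤ m) := by
    simp only [mem_sdiff, mem_filter, mem_univ, true_and]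
    exact ⟨le_rfl, fun hjm => absurd (lt_of_lt_of_le h hjm) (lt_irrefl m)⟩
  have := Finset.single_le_sum (f := p) (fun i _ => (hp i).le) hj
  linarith

lemma wobj_diff (p w : Fin n → ℤ) (σ σ' : Fin n → ℤ) (a b : Fin n) (hab : a ≠ b)
    (h : ∀ m, m ≠ a → m ≠ b → σ' m = σ m) :
    WObj n p w σ' = WObj n p w σ + (w a * (σ' a - σ a) + w b * (σ' b - σ b)) := by
  unfold WObj
  have key : ∀ m ∈ (univ : Finset (Fin n)), w m * (σ' m + p m) =
      w m * (σ m + p m) + ((if m = a then w a * (σ' a - σ a) else 0)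
        + (if m = b then w b * (σ' b - σ b) else 0)) := by
    intro m _
    by_cases hma : m = a
    · subst hma; simp [hab]; ring
    · by_cases hmb : m = b
      · subst hmb; simp [hma]; ring
      · simp [hma, hmb, h m hma hmb]
  rw [Finset.sum_congr rfl key]
  rw [Finset.sum_add_distrib, Finset.sum_add_distrib, Finset.sum_ite_eq' univ a,
    Finset.sum_ite_eq' univ b]
  simp [add_assoc]

/-- Exchange lemma: swapping a time-adjacent inverted pair (same half) gives a
feasible schedule, no larger `Dmax` and `WObj`, and strictly fewer inversions. -/
lemma swap_lemma (p w : Fin n → ℤ) (T1 T2 : ℤ) (σ : Fin n → ℤ)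
    (hp : ∀ j, 0 < p j) (hw : ∀ j, 0 < w j)
    (hwspt : ∀ i j : Fin n, i ≤ j → p i * w j ≤ p j * w i)
    (hfeas : Feasible n p T1 T2 σ)
    (a b : Fin n) (hba : b < a) (hab : σ a < σ b)
    (hside : ∀ m, m ≠ a → m ≠ b → σ m + p m ≤ σ a ∨ σ b + p b ≤ σ m)
    (hhalf2 : σ b + p b ≤ T1 ∨ T2 ≤ σ a) :
    ∃ σ' : Fin n → ℤ, Feasible n p T1 T2 σ' ∧ Dmax n p σ' ≤ Dmax n p σ ∧
      WObj n p w σ' ≤ WObj n p w σ ∧ Nval n σ' < Nval n σ := by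
  classical
  obtain ⟨hpos, hdisj, hhalf⟩ := hfeas
  have hne : a ≠ b := hba.ne'
  set σ' : Fin n → ℤ := Function.update (Function.update σ b (σ a)) a (σ a + p b) with hσ'
  have hσ'a : σ' a = σ a + p b := by simp [hσ']
  have hσ'b : σ' b = σ a := by
    simp [hσ', Function.update_of_ne (Ne.symm hne)]
  have hσ'm : ∀ m, m ≠ a → m ≠ b → σ' m = σ m := by
    intro m hma hmb
    simp [hσ', Function.update_of_ne hma, Function.update_of_ne hmb]
  have hAB : σ a + p a ≤ σ b := by
    rcases hdisj a b hne with h | h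
    · exact h
    · exfalso; linarith [hp b]
  -- order relations for other jobs
  have hcmp : ∀ m, m ≠ a → m ≠ b →
      (σ m + p m ≤ σ a ∧ σ' m + p m ≤ σ' b) ∨
      (σ b + p b ≤ σ m ∧ σ' a + p a ≤ σ' m) := by
    intro m hma hmb
    rcases hside m hma hmb with h | h
    · left; refine ⟨h, ?_⟩; rw [hσ'm m hma hmb, hσ'b]; exact h
    · right; refine ⟨h, ?_⟩; rw [hσ'm m hma hmb, hσ'a]; linarith
  refine ⟨σ', ⟨?_, ?_, ?_⟩, ?_, ?_, ?_⟩
  · -- nonneg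
    intro j
    by_cases hja : j = a
    · rw [hja, hσ'a]; linarith [hpos a, hp b]
    by_cases hjb : j = b
    · rw [hjb, hσ'b]; exact hpos a
    · rw [hσ'm j hja hjb]; exact hpos j
  · -- disjoint
    intro i j hij
    by_cases hia : i = a
    · by_cases hjb : j = b
      · right; rw [hia, hjb, hσ'a, hσ'b]
      · have hja : j ≠ a := by rw [hia] at hij; exact fun h => hij h.symm
        rcases hcmp j hja hjb with ⟨h1, h2⟩ | ⟨h1, h2⟩
        · right
          rw [hia, hσ'm j hja hjb, hσ'a]
          linarith [hp b]
        · left; rw [hia]; exact h2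
    by_cases hib : i = b
    · by_cases hja : j = a
      · left; rw [hib, hja, hσ'a, hσ'b]
      · have hjb : j ≠ b := by rw [hib] at hij; exact fun h => hij h.symm
        rcases hcmp j hja hjb with ⟨h1, h2⟩ | ⟨h1, h2⟩
        · right
          rw [hib, hσ'm j hja hjb, hσ'b]
          exact h1
        · left
          rw [hib, hσ'm j hja hjb, hσ'b]
          linarith
    · by_cases hja : j = a
      · rcases hcmp i hia hib with ⟨h1, h2⟩ | ⟨h1, h2⟩
        · left
          rw [hja, hσ'm i hia hib, hσ'a]
          linarith [hp b]
        · right; rw [hja]; exact h2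
      by_cases hjb : j = b
      · rcases hcmp i hia hib with ⟨h1, h2⟩ | ⟨h1, h2⟩
        · left; rw [hjb]; exact h2
        · right
          rw [hjb, hσ'm i hia hib, hσ'b]
          linarith
      · rw [hσ'm i hia hib, hσ'm j hja hjb]
        exact hdisj i j hij
  · -- halves
    intro j
    by_cases hja : j = a
    · rw [hja, hσ'a]
      rcases hhalf2 with h | h
      · left; linarith
      · right; linarith [hp b]
    by_cases hjb : j = b
    · rw [hjb, hσ'b]
      rcases hhalf2 with h | h
      · left; linarith [hp b]
      · right; exact h
    · rw [hσ'm j hja hjb]; exact hhalf j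
  · -- Dmax
    have hca : Corig n p b + p a ≤ Corig n p a := corig_add_le n p hp hba
    apply dmax_le n p σ' (dmax_nonneg n p σ)
    intro j
    have hDa := dev_le_dmax n p σ a
    have hDb := dev_le_dmax n p σ b
    unfold Dev at hDa hDb ⊢
    rw [abs_le] at hDa hDb
    by_cases hja : j = a
    · rw [hja, hσ'a, abs_le]
      constructor <;> linarith [hp a, hp b, hDa.1, hDa.2, hDb.1, hDb.2]
    by_cases hjb : j = b
    · rw [hjb, hσ'b, abs_le]
      constructor <;> linarith [hp a, hp b, hDa.1, hDa.2, hDb.1, hDb.2]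
    · rw [hσ'm j hja hjb]
      exact dev_le_dmax n p σ j
  · -- WObj
    rw [wobj_diff n p w σ σ' a b hne hσ'm, hσ'a, hσ'b]
    have h1 : w b * p a ≤ w b * (σ b - σ a) :=
      mul_le_mul_of_nonneg_left (by linarith) (hw b).le
    have h2 := hwspt b a hba.le
    nlinarith
  · -- Nval
    unfold Nval
    apply Finset.card_lt_card
    constructor
    · intro q hq
      simp only [mem_filter, mem_univ, true_and] at hq ⊢
      obtain ⟨hlt, hinv⟩ := hq
      refine ⟨hlt, ?_⟩
      obtain ⟨x, y⟩ := q
      simp only at hlt hinv ⊢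
      by_cases hxa : x = a
      · by_cases hyb : y = b
        · exfalso; rw [hxa, hyb] at hlt; exact absurd hlt (asymm hba)
        · have hya : y ≠ a := by rw [hxa] at hlt; exact hlt.ne'
          rw [hxa] at hinv ⊢
          rcases hcmp y hya hyb with ⟨h1, h2⟩ | ⟨h1, h2⟩
          · linarith [hp y]
          · exfalso
            rw [hσ'm y hya hyb, hσ'a] at hinv
            linarith [hp a, hp b]
      by_cases hxb : x = b
      · by_cases hya : y = a
        · exfalso; rw [hxb, hya, hσ'a, hσ'b] at hinv; linarith [hp b]
        · have hyb : y ≠ b := by rw [hxb] at hlt; exact hlt.ne'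
          rw [hxb] at hinv ⊢
          rcases hcmp y hya hyb with ⟨h1, h2⟩ | ⟨h1, h2⟩
          · linarith [hp y]
          · exfalso
            rw [hσ'm y hya hyb, hσ'b] at hinv
            linarith [hp a, hp b]
      · by_cases hya : y = a
        · rw [hya] at hinv ⊢
          rcases hcmp x hxa hxb with ⟨h1, h2⟩ | ⟨h1, h2⟩
          · exfalso
            rw [hσ'm x hxa hxb, hσ'a] at hinv
            rw [hσ'b] at h2
            linarith [hp x, hp b]
          · linarith [hp b]
        by_cases hyb : y = b
        · rw [hyb] at hinv ⊢
          rcases hcmp x hxa hxb with ⟨h1, h2⟩ | ⟨h1, h2⟩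
          · exfalso
            rw [hσ'm x hxa hxb, hσ'b] at hinv
            linarith [hp x]
          · rw [hσ'm x hxa hxb, hσ'b] at hinv
            linarith [hp b]
        · rw [hσ'm x hxa hxb, hσ'm y hya hyb] at hinv
          exact hinv
    · intro hsub
      have hmem : (b, a) ∈ (Finset.univ : Finset (Fin n × Fin n)).filter
          (fun q => q.1 < q.2 ∧ σ q.2 < σ q.1) := by
        simp only [mem_filter, mem_univ, true_and]
        exact ⟨hba, hab⟩
      have := hsub hmem
      simp only [mem_filter, mem_univ, true_and] at this
      rw [hσ'a, hσ'b] at this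
      linarith [hp b, this.2]

/-- Shift lemma: moving a single earlier-schedule job one unit to the left
(when the slot before it is free and its deviation stays bounded) gives an
admissible schedule with strictly smaller objective. -/
lemma shift_lemma (p w : Fin n → ℤ) (T1 T2 k : ℤ) (μ : ℚ) (σ : Fin n → ℤ)
    (hp : ∀ j, 0 < p j) (hw : ∀ j, 0 < w j) (hμ : 0 ≤ μ)
    (hadm : Admissible n p T1 T2 k σ) (j : Fin n)
    (hj1 : 1 ≤ σ j) (hearly : σ j + p j ≤ T1)
    (hfree : ∀ m, m ≠ j → σ m + p m ≠ σ j)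
    (hdev : |σ j - 1 + p j - Corig n p j| ≤ Dmax n p σ) :
    ∃ σ', Admissible n p T1 T2 k σ' ∧ Zval n p w μ σ' < Zval n p w μ σ := by
  classical
  obtain ⟨⟨hpos, hdisj, hhalf⟩, hk⟩ := hadm
  set σ' : Fin n → ℤ := Function.update σ j (σ j - 1) with hσ'
  have hσ'j : σ' j = σ j - 1 := by simp [hσ']
  have hσ'm : ∀ m, m ≠ j → σ' m = σ m := by
    intro m hm; simp [hσ', Function.update_of_ne hm]
  have hDle : Dmax n p σ' ≤ Dmax n p σ := by
    apply dmax_le n p σ' (dmax_nonneg n p σ)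
    intro m
    by_cases hm : m = j
    · rw [hm]; unfold Dev; rw [hσ'j]; exact hdev
    · unfold Dev; rw [hσ'm m hm]; exact dev_le_dmax n p σ m
  have hfeas' : Feasible n p T1 T2 σ' := by
    refine ⟨?_, ?_, ?_⟩
    · intro m
      by_cases hm : m = j
      · rw [hm, hσ'j]; linarith
      · rw [hσ'm m hm]; exact hpos m
    · intro x y hxy
      by_cases hxj : x = j
      · have hyj : y ≠ j := by rw [hxj] at hxy; exact fun h => hxy h.symm
        rw [hxj, hσ'j, hσ'm y hyj]
        rcases hdisj j y (fun h => hxy (hxj.trans h)) with h | h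
        · left; linarith
        · right
          have := hfree y hyj
          omega
      by_cases hyj : y = j
      · have hxj' : x ≠ j := hxj
        rw [hyj, hσ'j, hσ'm x hxj']
        rcases hdisj x j hxj' with h | h
        · left
          have := hfree x hxj'
          omega
        · right; linarith
      · rw [hσ'm x hxj, hσ'm y hyj]
        exact hdisj x y hxy
    · intro m
      by_cases hm : m = j
      · left; rw [hm, hσ'j]; linarith
      · rw [hσ'm m hm]; exact hhalf m
  have hW : WObj n p w σ' < WObj n p w σ := by
    unfold WObj
    have key : ∀ m ∈ (univ : Finset (Fin n)), w m * (σ' m + p m) =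
        w m * (σ m + p m) + (if m = j then -w j else 0) := by
      intro m _
      by_cases hm : m = j
      · rw [hm, hσ'j]; simp; ring
      · rw [hσ'm m hm]; simp [hm]
    rw [Finset.sum_congr rfl key, Finset.sum_add_distrib, Finset.sum_ite_eq' univ j]
    simp only [mem_univ, if_true]
    linarith [hw j]
  refine ⟨σ', ⟨hfeas', hDle.trans hk⟩, ?_⟩
  unfold Zval
  have h1 : (Dmax n p σ' : ℚ) ≤ (Dmax n p σ : ℚ) := by exact_mod_cast hDle
  have h2 : (WObj n p w σ' : ℚ) < (WObj n p w σ : ℚ) := by exact_mod_cast hW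
  have := mul_le_mul_of_nonneg_left h1 hμ
  linarith

/-- there exists an optimal schedule with both halves in WSPT
order, earlier-schedule jobs completing no later than in `π*`, and each
earlier-schedule job after an idle time unit processed exactly `Δ_max` time
units earlier than in `π*`. -/
theorem stmt_3 (n : ℕ) (p w : Fin n → ℤ) (T1 T2 k : ℤ) (μ : ℚ)
    (hn : 0 < n) (hp : ∀ j, 0 < p j) (hw : ∀ j, 0 < w j)
    (hwspt : ∀ i j : Fin n, i ≤ j → p i * w j ≤ p j * w i)
    (hT1 : 0 ≤ T1) (hT12 : T1 < T2) (hk : 0 ≤ k) (hμ : 0 ≤ μ)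
    (hadm : ∃ σ, Admissible n p T1 T2 k σ) :
    ∃ σ, Optimal n p w T1 T2 k μ σ ∧
      (∀ i j : Fin n, i < j → σ i + p i ≤ T1 → σ j + p j ≤ T1 → σ i < σ j) ∧
      (∀ i j : Fin n, i < j → T2 ≤ σ i → T2 ≤ σ j → σ i < σ j) ∧
      (∀ j, σ j + p j ≤ T1 → σ j + p j ≤ Corig n p j) ∧
      (∀ t : ℤ, IdleUnit n p T1 σ t →
        ∀ j, σ j + p j ≤ T1 → t + 1 ≤ σ j →
          Corig n p j - (σ j + p j) = Dmax n p σ) := by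
  classical
  obtain ⟨σ₀, hσ₀⟩ := hadm
  -- all admissible schedules live in a finite box
  set B : Finset (Fin n → ℤ) :=
    Fintype.piFinset (fun j => Finset.Icc 0 (Corig n p j + k)) with hB
  have hmemB : ∀ τ, Admissible n p T1 T2 k τ → τ ∈ B := by
    rintro τ ⟨⟨hpos, -, -⟩, hkτ⟩
    rw [hB, Fintype.mem_piFinset]
    intro j
    rw [Finset.mem_Icc]
    refine ⟨hpos j, ?_⟩
    have h1 : |τ j + p j - Corig n p j| ≤ k := le_trans (dev_le_dmax n p τ j) hkτ
    rw [abs_le] at h1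
    linarith [hp j, h1.2]
  set A : Finset (Fin n → ℤ) := B.filter (fun τ => Admissible n p T1 T2 k τ) with hA
  have hmemA : ∀ τ, Admissible n p T1 T2 k τ → τ ∈ A :=
    fun τ h => mem_filter.mpr ⟨hmemB τ h, h⟩
  obtain ⟨σ₁, hσ₁A, hσ₁min⟩ :=
    Finset.exists_min_image A (Zval n p w μ) ⟨σ₀, hmemA σ₀ hσ₀⟩
  set Aopt : Finset (Fin n → ℤ) :=
    A.filter (fun τ => Zval n p w μ τ ≤ Zval n p w μ σ₁) with hAopt
  obtain ⟨σ, hσmem, hσNmin⟩ :=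
    Finset.exists_min_image Aopt (Nval n) ⟨σ₁, mem_filter.mpr ⟨hσ₁A, le_rfl⟩⟩
  have hσA : σ ∈ A := (mem_filter.mp hσmem).1
  have hσZ : Zval n p w μ σ ≤ Zval n p w μ σ₁ := (mem_filter.mp hσmem).2
  have hσadm : Admissible n p T1 T2 k σ := (mem_filter.mp hσA).2
  have hopt : Optimal n p w T1 T2 k μ σ :=
    ⟨hσadm, fun τ hτ => hσZ.trans (hσ₁min τ (hmemA τ hτ))⟩
  have hmemAopt : ∀ τ, Admissible n p T1 T2 k τ →
      Zval n p w μ τ ≤ Zval n p w μ σ → τ ∈ Aopt :=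
    fun τ h hz => mem_filter.mpr ⟨hmemA τ h, hz.trans hσZ⟩
  obtain ⟨⟨hpos, hdisj, hhalfσ⟩, hkσ⟩ := hσadm
  have hdistinct : ∀ i j : Fin n, i ≠ j → σ i ≠ σ j := by
    intro i j hij heq
    rcases hdisj i j hij with h | h
    · linarith [hp i]
    · linarith [hp j]
  -- no same-half inversions
  have hnoinv : ∀ i j : Fin n, i < j →
      ((σ i + p i ≤ T1 ∧ σ j + p j ≤ T1) ∨ (T2 ≤ σ i ∧ T2 ≤ σ j)) → σ i < σ j := by
    by_contra hc
    push_neg at hc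
    obtain ⟨i0, j0, hij0, hh0, hge0⟩ := hc
    have hlt0 : σ j0 < σ i0 := lt_of_le_of_ne hge0 (hdistinct j0 i0 (ne_of_gt hij0))
    set P : Finset (Fin n × Fin n) := (univ : Finset (Fin n × Fin n)).filter (fun q =>
      q.1 < q.2 ∧ σ q.2 < σ q.1 ∧
      ((σ q.1 + p q.1 ≤ T1 ∧ σ q.2 + p q.2 ≤ T1) ∨ (T2 ≤ σ q.1 ∧ T2 ≤ σ q.2))) with hP
    have hPne : P.Nonempty :=
      ⟨(i0, j0), mem_filter.mpr ⟨mem_univ _, ⟨hij0, hlt0, hh0⟩⟩⟩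
    obtain ⟨q, hqP, hqmin⟩ := Finset.exists_min_image P (fun q => σ q.1 - σ q.2) hPne
    obtain ⟨x, y⟩ := q
    have hqP' := mem_filter.mp hqP
    simp only [mem_univ, true_and] at hqP'
    obtain ⟨hba, hab, hhq⟩ := hqP'
    -- x < y (indices), σ y < σ x (time): the pair (b, a) = (x, y)
    have hside : ∀ m, m ≠ y → m ≠ x → σ m + p m ≤ σ y ∨ σ x + p x ≤ σ m := by
      intro m hma hmb
      rcases hdisj m y hma with h1 | h1
      · exact Or.inl h1
      · rcases hdisj x m (Ne.symm hmb) with h2 | h2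
        · exact Or.inr h2
        · exfalso
          have hm1 : σ y < σ m := by linarith [hp y]
          have hm2 : σ m < σ x := by linarith [hp m]
          rcases lt_or_ge x m with hxm | hmx
          · have hmem : (x, m) ∈ P := by
              refine mem_filter.mpr ⟨mem_univ _, ⟨hxm, hm2, ?_⟩⟩
              rcases hhq with ⟨hx1, hy1⟩ | ⟨hx1, hy1⟩
              · exact Or.inl ⟨hx1, by linarith [hp x]⟩
              · exact Or.inr ⟨hx1, by linarith⟩
            have := hqmin (x, m) hmem
            simp only at this
            linarith
          · have hmx' : m < x := lt_of_le_of_ne hmx hmb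
            have hmem : (m, y) ∈ P := by
              refine mem_filter.mpr ⟨mem_univ _, ⟨lt_trans hmx' hba, hm1, ?_⟩⟩
              rcases hhq with ⟨hx1, hy1⟩ | ⟨hx1, hy1⟩
              · exact Or.inl ⟨by linarith [hp x], hy1⟩
              · exact Or.inr ⟨by linarith, hy1⟩
            have := hqmin (m, y) hmem
            simp only at this
            linarith
    have hhalf2 : σ x + p x ≤ T1 ∨ T2 ≤ σ y := by
      rcases hhq with ⟨h1, -⟩ | ⟨-, h2⟩
      · exact Or.inl h1
      · exact Or.inr h2
    obtain ⟨σ', hfeas', hD', hW', hN'⟩ :=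
      swap_lemma n p w T1 T2 σ hp hw hwspt ⟨hpos, hdisj, hhalfσ⟩ y x hba hab hside hhalf2
    have hadm' : Admissible n p T1 T2 k σ' := ⟨hfeas', hD'.trans hkσ⟩
    have hZ' : Zval n p w μ σ' ≤ Zval n p w μ σ := by
      unfold Zval
      have h1 : (Dmax n p σ' : ℚ) ≤ (Dmax n p σ : ℚ) := Int.cast_le.mpr hD'
      have h2 : (WObj n p w σ' : ℚ) ≤ (WObj n p w σ : ℚ) := Int.cast_le.mpr hW'
      have := mul_le_mul_of_nonneg_left h1 hμ
      linarith
    have := hσNmin σ' (hmemAopt σ' hadm' hZ')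
    omega
  -- earlier-schedule jobs complete no later than originally
  have prop3 : ∀ j, σ j + p j ≤ T1 → σ j + p j ≤ Corig n p j := by
    by_contra hc
    push_neg at hc
    set S : Finset (Fin n) :=
      univ.filter (fun j => σ j + p j ≤ T1 ∧ Corig n p j < σ j + p j) with hS
    have hSne : S.Nonempty := by
      obtain ⟨j0, h1, h2⟩ := hc
      exact ⟨j0, mem_filter.mpr ⟨mem_univ _, h1, h2⟩⟩
    obtain ⟨j, hjS, hjmin⟩ := Finset.exists_min_image S σ hSne
    have hjS' := mem_filter.mp hjS
    obtain ⟨-, hjT, hjlate⟩ := hjS'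
    by_cases hcase : ∃ m, m ≠ j ∧ σ m + p m = σ j
    · obtain ⟨m, hmj, hmC⟩ := hcase
      have hmT : σ m + p m ≤ T1 := by
        rcases hhalfσ m with h | h
        · exact h
        · exfalso; linarith [hp j, hp m]
      have hmlt : m < j := by
        rcases lt_trichotomy m j with h | h | h
        · exact h
        · exact absurd h hmj
        · exfalso
          have := hnoinv j m h (Or.inl ⟨hjT, hmT⟩)
          linarith [hp m]
      have hC := corig_add_le n p hp hmlt
      have hmmem : m ∈ S := mem_filter.mpr ⟨mem_univ _, hmT, by linarith⟩
      have := hjmin m hmmem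
      linarith [hp m]
    · push_neg at hcase
      have hj1 : 1 ≤ σ j := by
        rcases lt_or_ge (σ j) 1 with h | h
        · exfalso
          have h0 : σ j = 0 := le_antisymm (by linarith) (hpos j)
          have := p_le_corig n p hp j
          rw [h0] at hjlate
          linarith
        · exact h
      have hdev : |σ j - 1 + p j - Corig n p j| ≤ Dmax n p σ := by
        have hD := dev_le_dmax n p σ j
        unfold Dev at hD
        rw [abs_le] at hD ⊢
        constructor
        · linarith [dmax_nonneg n p σ]
        · linarith [hD.2]
      obtain ⟨σ', hadm', hZ'⟩ := shift_lemma n p w T1 T2 k μ σ hp hw hμ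
        ⟨⟨hpos, hdisj, hhalfσ⟩, hkσ⟩ j hj1 hjT hcase hdev
      have := hσ₁min σ' (hmemA σ' hadm')
      linarith
  -- earlier jobs after an idle unit are shifted left exactly Dmax
  have prop4 : ∀ j, σ j + p j ≤ T1 → (∃ t, IdleUnit n p T1 σ t ∧ t + 1 ≤ σ j) →
      Corig n p j - (σ j + p j) = Dmax n p σ := by
    by_contra hc
    push_neg at hc
    set S : Finset (Fin n) :=
      univ.filter (fun j => σ j + p j ≤ T1 ∧ (∃ t, IdleUnit n p T1 σ t ∧ t + 1 ≤ σ j) ∧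
        Corig n p j - (σ j + p j) ≠ Dmax n p σ) with hS
    have hSne : S.Nonempty := by
      obtain ⟨j0, h1, h2, h3⟩ := hc
      exact ⟨j0, mem_filter.mpr ⟨mem_univ _, h1, h2, h3⟩⟩
    obtain ⟨j, hjS, hjmin⟩ := Finset.exists_min_image S σ hSne
    obtain ⟨-, hjT, ⟨t, hidle, htj⟩, hjne⟩ := mem_filter.mp hjS
    have hje : 0 ≤ Corig n p j - (σ j + p j) := by linarith [prop3 j hjT]
    have hjd : Corig n p j - (σ j + p j) ≤ Dmax n p σ := by
      have hD := dev_le_dmax n p σ j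
      unfold Dev at hD
      rw [abs_le] at hD
      linarith [hD.1]
    have hjlt : Corig n p j - (σ j + p j) < Dmax n p σ := lt_of_le_of_ne hjd hjne
    obtain ⟨ht0, hnocover, -⟩ := hidle
    by_cases hcase : ∃ m, m ≠ j ∧ σ m + p m = σ j
    · obtain ⟨m, hmj, hmC⟩ := hcase
      have hmT : σ m + p m ≤ T1 := by
        rcases hhalfσ m with h | h
        · exact h
        · exfalso; linarith [hp j, hp m]
      have hmlt : m < j := by
        rcases lt_trichotomy m j with h | h | h
        · exact h
        · exact absurd h hmj
        · exfalso
          have := hnoinv j m h (Or.inl ⟨hjT, hmT⟩)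
          linarith [hp m]
      have hmt : t + 1 ≤ σ m := by
        by_contra h
        push_neg at h
        exact hnocover m ⟨by linarith, by linarith⟩
      have hC := corig_add_le n p hp hmlt
      have hmlt' : Corig n p m - (σ m + p m) < Dmax n p σ := by linarith
      have hmmem : m ∈ S := mem_filter.mpr
        ⟨mem_univ _, hmT, ⟨t, ⟨ht0, hnocover, ⟨j, hjT, htj⟩⟩, hmt⟩, ne_of_lt hmlt'⟩
      have := hjmin m hmmem
      linarith [hp m]
    · push_neg at hcase
      have hj1 : 1 ≤ σ j := by linarith
      have hdev : |σ j - 1 + p j - Corig n p j| ≤ Dmax n p σ := by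
        rw [abs_le]
        constructor
        · linarith
        · linarith [dmax_nonneg n p σ]
      obtain ⟨σ', hadm', hZ'⟩ := shift_lemma n p w T1 T2 k μ σ hp hw hμ
        ⟨⟨hpos, hdisj, hhalfσ⟩, hkσ⟩ j hj1 hjT hcase hdev
      have := hσ₁min σ' (hmemA σ' hadm')
      linarith
  refine ⟨σ, hopt, ?_, ?_, prop3, ?_⟩
  · exact fun i j hij hi hj => hnoinv i j hij (Or.inl ⟨hi, hj⟩)
  · exact fun i j hij hi hj => hnoinv i j hij (Or.inr ⟨hi, hj⟩)
  · intro t hidle j hjT hjt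
    exact prop4 j hjT ⟨t, hidle, hjt⟩
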